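/- arXiv:2307.04385 — 2 statements merged into one kernel-verified Lean document; each statement's English description precedes it below -/
import Mathlib

section
/- Let T : ℕ → ℝ satisfy T 4 = 4 and, for every j ≥ 5, T j ≥ T (j-1) + 1 + Real.logb 2 ((j / 2 : ℕ) : ℝ), where j / 2 denotes natural number (floor) division. Then for every k ≥ 8, T k ≥ ((k : ℝ) / 2) * Real.logb 2 ((k : ℝ) / 4 - 1). In particular, any sequence satisfying this recurrence is Ω(k log k). -/
/-!
Unrolling the recurrence from `T 4` gives `T k ≥ T 4 + ∑_{4 < j ≤ k} log₂ ⌊j/2⌋`, all of whose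
terms are nonnegative. Keeping only the `⌈k/2⌉ ≥ k/2` terms with `j > k/2`, each of which has
`⌊j/2⌋ ≥ k/4 - 1`, yields the bound.
-/

open Finset Real

theorem Finset.sum_Ioc_le_sub_of_le_sub {G : Type*} [AddCommGroup G] [PartialOrder G]
    [IsOrderedAddMonoid G] {f g : ℕ → G} {a b : ℕ} (hab : a ≤ b)
    (h : ∀ j ∈ Ioc a b, g j ≤ f j - f (j - 1)) :
    ∑ j ∈ Ioc a b, g j ≤ f b - f a := by
  induction b, hab using Nat.le_induction with
  | base => simp
  | succ b hab ih =>
    have hstep : g (b + 1) ≤ f (b + 1) - f b := h (b + 1) (mem_Ioc.2 ⟨by omega, le_rfl⟩)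
    have hprev := ih fun j hj ↦ h j (Ioc_subset_Ioc_right b.le_succ hj)
    rw [sum_Ioc_succ_top hab]
    calc ∑ j ∈ Ioc a b, g j + g (b + 1) ≤ (f b - f a) + (f (b + 1) - f b) := add_le_add hprev hstep
      _ = f (b + 1) - f a := by abel

theorem Real.logb_natCast_nonneg {b : ℝ} (hb : 1 < b) (n : ℕ) : 0 ≤ logb b n := by
  rcases n.eq_zero_or_pos with rfl | hn
  · simp
  · exact logb_nonneg hb (Nat.one_le_cast.2 hn)

theorem half_le_card_Ioc_half (k : ℕ) : (k : ℝ) / 2 ≤ #(Ioc (k / 2) k) := by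
  rw [Nat.card_Ioc, div_le_iff₀ two_pos]
  exact_mod_cast (by omega : k ≤ (k - k / 2) * 2)

theorem logb_sub_one_le_logb_half_of_half_lt {k j : ℕ} (hk : 5 ≤ k) (hj : k / 2 < j) :
    logb 2 ((k : ℝ) / 4 - 1) ≤ logb 2 ((j / 2 : ℕ) : ℝ) := by
  have hk' : (5 : ℝ) ≤ k := by exact_mod_cast hk
  have hkj : (k : ℝ) ≤ 4 * ((j / 2 : ℕ) : ℝ) + 4 := by exact_mod_cast (by omega : k ≤ 4 * (j / 2) + 4)
  exact logb_le_logb_of_le one_lt_two (by linarith) (by linarith)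

theorem mul_logb_le_sum_Ioc_logb_half {a k : ℕ} (hk : 8 ≤ k) (ha : a ≤ k / 2) :
    (k : ℝ) / 2 * logb 2 ((k : ℝ) / 4 - 1) ≤ ∑ j ∈ Ioc a k, logb 2 ((j / 2 : ℕ) : ℝ) := by
  have hL : 0 ≤ logb 2 ((k : ℝ) / 4 - 1) := by
    have hk' : (8 : ℝ) ≤ k := by exact_mod_cast hk
    exact logb_nonneg one_lt_two (by linarith)
  calc (k : ℝ) / 2 * logb 2 ((k : ℝ) / 4 - 1)
      ≤ #(Ioc (k / 2) k) • logb 2 ((k : ℝ) / 4 - 1) := by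
        rw [nsmul_eq_mul]; exact mul_le_mul_of_nonneg_right (half_le_card_Ioc_half k) hL
    _ ≤ ∑ j ∈ Ioc (k / 2) k, logb 2 ((j / 2 : ℕ) : ℝ) :=
        card_nsmul_le_sum _ _ _ fun j hj ↦
          logb_sub_one_le_logb_half_of_half_lt (by omega) (mem_Ioc.1 hj).1
    _ ≤ ∑ j ∈ Ioc a k, logb 2 ((j / 2 : ℕ) : ℝ) :=
        sum_le_sum_of_subset_of_nonneg (Ioc_subset_Ioc_left ha) fun j _ _ ↦
          logb_natCast_nonneg one_lt_two _

theorem spiral_recurrence_lower_bound (T : ℕ → ℝ)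
    (h4 : T 4 = 4)
    (hrec : ∀ j, 5 ≤ j → T j ≥ T (j - 1) + 1 + Real.logb 2 ((j / 2 : ℕ) : ℝ)) :
    ∀ k, 8 ≤ k → T k ≥ ((k : ℝ) / 2) * Real.logb 2 ((k : ℝ) / 4 - 1) := by
  intro k hk
  have hunrolled : ∑ j ∈ Ioc 4 k, logb 2 ((j / 2 : ℕ) : ℝ) ≤ T k - T 4 :=
    sum_Ioc_le_sub_of_le_sub (by omega) fun j hj ↦ by
      linarith [hrec j (mem_Ioc.1 hj).1]
  linarith [mul_logb_le_sum_Ioc_logb_half hk (a := 4) (by omega)]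
end

section
/- For every natural number k ≥ 8, the sum ∑_{j=5}^{k} Real.logb 2 ((j / 2 : ℕ) : ℝ), where j / 2 denotes natural number (floor) division and the sum ranges over the integers j with 5 ≤ j ≤ k, is at least ((k : ℝ) / 2) * Real.logb 2 ((k : ℝ) / 4 - 1). -/
/-! More than half of the indices `j ∈ [5, k]`, namely those with `k / 2 < j`, have
`⌊j / 2⌋ ≥ k / 4 - 1`, and every term of the sum is nonnegative since `⌊j / 2⌋ ≥ 2`. -/

open Finset

theorem Finset.mul_le_sum_of_subset {ι : Type*} {s t : Finset ι} {f : ι → ℝ} {a c : ℝ}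
    (hts : t ⊆ s) (hf : ∀ i ∈ s, 0 ≤ f i) (hc : ∀ i ∈ t, c ≤ f i) (hc0 : 0 ≤ c)
    (ha : a ≤ #t) : a * c ≤ ∑ i ∈ s, f i :=
  calc a * c ≤ #t * c := mul_le_mul_of_nonneg_right ha hc0
    _ = #t • c := (nsmul_eq_mul _ _).symm
    _ ≤ ∑ i ∈ t, f i := card_nsmul_le_sum _ _ _ hc
    _ ≤ ∑ i ∈ s, f i := sum_le_sum_of_subset_of_nonneg hts fun i hi _ ↦ hf i hi

theorem Nat.div_four_sub_one_le_div_two {j k : ℕ} (h : k / 2 < j) :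
    (k : ℝ) / 4 - 1 ≤ ((j / 2 : ℕ) : ℝ) := by
  have : k ≤ 4 * (j / 2) + 4 := by omega
  have : (k : ℝ) ≤ 4 * ((j / 2 : ℕ) : ℝ) + 4 := by exact_mod_cast this
  linarith

theorem Nat.le_two_mul_card_Ioc_div_two (k : ℕ) : k ≤ 2 * #(Ioc (k / 2) k) := by
  rw [Nat.card_Ioc]
  omega

theorem sum_logb_floor_half_lower_bound (k : ℕ) (hk : 8 ≤ k) :
    ((k : ℝ) / 2) * Real.logb 2 ((k : ℝ) / 4 - 1) ≤
      ∑ j ∈ Finset.Icc 5 k, Real.logb 2 ((j / 2 : ℕ) : ℝ) := by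
  have hk' : (8 : ℝ) ≤ k := by exact_mod_cast hk
  refine mul_le_sum_of_subset (t := Ioc (k / 2) k) ?subset ?nonneg ?bound
    (Real.logb_nonneg one_lt_two (by linarith)) ?card
  case subset =>
    intro j hj
    simp only [mem_Ioc, mem_Icc] at hj ⊢
    omega
  case nonneg =>
    intro j hj
    have : 2 ≤ j / 2 := by simp only [mem_Icc] at hj; omega
    exact Real.logb_nonneg one_lt_two (by exact_mod_cast this.trans' one_le_two)
  case bound =>
    intro j hj
    exact Real.logb_le_logb_of_le one_lt_two (by linarith)
      (Nat.div_four_sub_one_le_div_two (mem_Ioc.1 hj).1)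
  case card =>
    have : (k : ℝ) ≤ 2 * #(Ioc (k / 2) k) := by exact_mod_cast Nat.le_two_mul_card_Ioc_div_two k
    linarith
end
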